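/- Let s ≥ 0. There exists a constant C = C(s) > 0 such that for all nonnegative sequences a1, a2, a3, a4 : ℤ → [0,∞), the sequence G : ℤ → [0,∞] defined by G_k = Σ a1(k1)·a2(k2)·a3(k3)·a4(k4)/(|k3+k4|·|k1+k2+k3|·|k1+k2+k4|), where the sum ranges over all quadruples (k1,k2,k3,k4) ∈ ℤ⁴ with k1+k2+k3+k4 = k and (k3+k4)(k1+k2+k3)(k1+k2+k4) ≠ 0, satisfies ‖G‖_{H^s} ≤ C·‖a1‖_{H^s}·‖a2‖_{H^s}·‖a3‖_{H^s}·‖a4‖_{H^s} (the inequality holding in [0,∞]). -/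

import Mathlib

/-!
For `s ≥ 0`, `⟨k₁ + k₂ + k₃ + k₄⟩^s ≤ 2^(3s/2) ∏ ⟨kᵢ⟩^s` with `⟨k⟩ = (1 + k²)^(1/2)`, so it is
enough to prove the `ℓ²` estimate (`s = 0`) for the sequences `⟨·⟩^s aᵢ`. There, for fixed
`k, k₃, k₄`, the sum over `k₁ + k₂ = k - k₃ - k₄` is a convolution, bounded by `‖a₁‖ ‖a₂‖`
by Cauchy–Schwarz; Cauchy–Schwarz in `(k₃, k₄)` then bounds `G_k` by `‖a₁‖ ‖a₂‖ ‖a₃‖ ‖a₄‖`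
times the `ℓ²` norm of the multiplier in `(k₃, k₄)`. The multiplier is square summable in
`(k, k₃, k₄)` jointly: with `u = k - k₃`, `v = k - k₄` it equals `1 / (|u| |v| |2k - u - v|)`,
whose squares sum to at most `(∑_{n ≠ 0} n⁻²)³`.
-/

open scoped ENNReal NNReal

/-- The `H^s` norm of a sequence indexed by `ℤ`, with values in `[0,∞]`. -/
noncomputable def HsE (s : ℝ) (a : ℤ → ℝ≥0∞) : ℝ≥0∞ :=
  (∑' k : ℤ, ENNReal.ofReal ((1 + (k : ℝ) ^ 2) ^ s) * a k ^ 2) ^ (1 / 2 : ℝ)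

open MeasureTheory

noncomputable def l2Norm {α : Type*} (f : α → ℝ≥0∞) : ℝ≥0∞ := (∑' a, f a ^ 2) ^ (1 / 2 : ℝ)

section l2Norm

variable {α β : Type*}

lemma l2Norm_sq (f : α → ℝ≥0∞) : l2Norm f ^ 2 = ∑' a, f a ^ 2 := by
  rw [l2Norm, ← ENNReal.rpow_natCast, ← ENNReal.rpow_mul]
  norm_num

lemma l2Norm_le_iff {f : α → ℝ≥0∞} {c : ℝ≥0∞} : l2Norm f ≤ c ↔ ∑' a, f a ^ 2 ≤ c ^ 2 := by
  rw [← ENNReal.pow_le_pow_left_iff two_ne_zero, l2Norm_sq]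

lemma l2Norm_eq_iff {f : α → ℝ≥0∞} {c : ℝ≥0∞} : l2Norm f = c ↔ ∑' a, f a ^ 2 = c ^ 2 := by
  rw [← (ENNReal.pow_right_strictMono two_ne_zero).injective.eq_iff, l2Norm_sq]

lemma l2Norm_mono {f g : α → ℝ≥0∞} (h : f ≤ g) : l2Norm f ≤ l2Norm g := by
  rw [l2Norm_le_iff, l2Norm_sq]
  exact ENNReal.tsum_le_tsum fun a => pow_le_pow_left₀ zero_le (h a) 2

lemma l2Norm_const_mul (c : ℝ≥0∞) (f : α → ℝ≥0∞) :
    l2Norm (fun a => c * f a) = c * l2Norm f := by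
  rw [l2Norm_eq_iff, mul_pow, l2Norm_sq]
  simp_rw [mul_pow, ENNReal.tsum_mul_left]

lemma l2Norm_comp_equiv (e : β ≃ α) (f : α → ℝ≥0∞) : l2Norm (f ∘ e) = l2Norm f := by
  rw [l2Norm, l2Norm, Function.comp_def, e.tsum_eq (fun a => f a ^ 2)]

lemma l2Norm_mul_prod (f : α → ℝ≥0∞) (g : β → ℝ≥0∞) :
    l2Norm (fun p : α × β => f p.1 * g p.2) = l2Norm f * l2Norm g := by
  rw [l2Norm_eq_iff, mul_pow, l2Norm_sq, l2Norm_sq, ← ENNReal.tsum_mul_right,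
    ENNReal.tsum_prod']
  simp_rw [mul_pow, ENNReal.tsum_mul_left]

lemma l2Norm_l2Norm (f : α → β → ℝ≥0∞) :
    l2Norm (fun a => l2Norm (f a)) = l2Norm (Function.uncurry f) := by
  rw [l2Norm_eq_iff, l2Norm_sq, ENNReal.tsum_prod']
  simp_rw [l2Norm_sq, Function.uncurry_apply_pair]

theorem tsum_mul_le_l2Norm_mul (f g : α → ℝ≥0∞) : ∑' a, f a * g a ≤ l2Norm f * l2Norm g := by
  let _ : MeasurableSpace α := ⊤
  have : MeasurableSingletonClass α := ⟨fun _ => trivial⟩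
  have h := ENNReal.lintegral_mul_le_Lp_mul_Lq Measure.count Real.HolderConjugate.two_two
    (measurable_from_top (f := f)).aemeasurable (measurable_from_top (f := g)).aemeasurable
  simpa [lintegral_count, l2Norm] using h

end l2Norm

section QuadForm

variable {G : Type*} [AddCommGroup G] [DecidableEq G]

lemma tsum_ite_add_eq_mul_le (f g : G → ℝ≥0∞) (m : G) :
    ∑' u : G × G, (if u.1 + u.2 = m then f u.1 * g u.2 else 0) ≤ l2Norm f * l2Norm g := by
  have hfiber (x : G) : ∑' y, (if x + y = m then f x * g y else 0) = f x * g (m - x) := by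
    simp_rw [← eq_sub_iff_add_eq']
    exact tsum_ite_eq (m - x) _
  rw [ENNReal.tsum_prod', tsum_congr hfiber, ← l2Norm_comp_equiv (Equiv.subLeft m) g]
  exact tsum_mul_le_l2Norm_mul f _

noncomputable def quadForm (m : G → G × G → ℝ≥0∞) (b1 b2 b3 b4 : G → ℝ≥0∞) (k : G) : ℝ≥0∞ :=
  ∑' q : G × G × G × G, if q.1 + q.2.1 + q.2.2.1 + q.2.2.2 = k then
    b1 q.1 * b2 q.2.1 * b3 q.2.2.1 * b4 q.2.2.2 * m k (q.2.2.1, q.2.2.2) else 0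

lemma quadForm_le_mul_tsum (m : G → G × G → ℝ≥0∞) (b1 b2 b3 b4 : G → ℝ≥0∞) (k : G) :
    quadForm m b1 b2 b3 b4 k ≤ l2Norm b1 * l2Norm b2 * ∑' p : G × G, b3 p.1 * b4 p.2 * m k p := by
  have hfiber (p : G × G) :
      ∑' u : G × G, (if u.1 + u.2 + p.1 + p.2 = k then
          b1 u.1 * b2 u.2 * b3 p.1 * b4 p.2 * m k p else 0) =
        (∑' u : G × G, if u.1 + u.2 = k - p.1 - p.2 then b1 u.1 * b2 u.2 else 0) *
          (b3 p.1 * b4 p.2 * m k p) := by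
    rw [← ENNReal.tsum_mul_right]
    refine tsum_congr fun u => ?_
    simp only [sub_sub, eq_sub_iff_add_eq, ← add_assoc, ite_mul, zero_mul, mul_assoc]
  calc quadForm m b1 b2 b3 b4 k
      = ∑' p : G × G, ∑' u : G × G, if u.1 + u.2 + p.1 + p.2 = k then
          b1 u.1 * b2 u.2 * b3 p.1 * b4 p.2 * m k p else 0 := by
        rw [quadForm, ← (Equiv.prodAssoc G G (G × G)).tsum_eq, ENNReal.tsum_prod',
          ENNReal.tsum_comm]
        simp only [Equiv.prodAssoc_apply, add_assoc]
    _ ≤ ∑' p : G × G, l2Norm b1 * l2Norm b2 * (b3 p.1 * b4 p.2 * m k p) := by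
        simp_rw [hfiber]
        exact ENNReal.tsum_le_tsum fun p => by gcongr; exact tsum_ite_add_eq_mul_le b1 b2 _
    _ = _ := ENNReal.tsum_mul_left

theorem l2Norm_quadForm_le (m : G → G × G → ℝ≥0∞) (b1 b2 b3 b4 : G → ℝ≥0∞) :
    l2Norm (quadForm m b1 b2 b3 b4) ≤
      l2Norm b1 * l2Norm b2 * l2Norm b3 * l2Norm b4 * l2Norm (Function.uncurry m) := by
  have hpoint (k : G) : quadForm m b1 b2 b3 b4 k ≤
      l2Norm b1 * l2Norm b2 * l2Norm b3 * l2Norm b4 * l2Norm (m k) :=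
    calc quadForm m b1 b2 b3 b4 k
        ≤ l2Norm b1 * l2Norm b2 * ∑' p : G × G, b3 p.1 * b4 p.2 * m k p :=
          quadForm_le_mul_tsum m b1 b2 b3 b4 k
      _ ≤ l2Norm b1 * l2Norm b2 * (l2Norm b3 * l2Norm b4 * l2Norm (m k)) := by
        rw [← l2Norm_mul_prod b3 b4]
        gcongr
        exact tsum_mul_le_l2Norm_mul _ _
      _ = _ := by ring
  calc l2Norm (quadForm m b1 b2 b3 b4)
      ≤ l2Norm (fun k => l2Norm b1 * l2Norm b2 * l2Norm b3 * l2Norm b4 * l2Norm (m k)) :=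
        l2Norm_mono hpoint
    _ = _ := by rw [l2Norm_const_mul, l2Norm_l2Norm]

end QuadForm

-- `0⁻¹ = 0` in `ℝ≥0`, so `invAbs 0 = 0`: the vanishing of the multiplier below encodes
-- the exclusion of the quadruples with `(k₃ + k₄)(k₁ + k₂ + k₃)(k₁ + k₂ + k₄) = 0`.
noncomputable def invAbs (n : ℤ) : ℝ≥0∞ := ((n.natAbs : ℝ≥0)⁻¹ : ℝ≥0)

lemma l2Norm_invAbs_ne_top : l2Norm invAbs ≠ ⊤ := by
  refine ENNReal.rpow_ne_top_of_nonneg (by norm_num) ?_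
  simp_rw [invAbs, ← ENNReal.coe_pow]
  rw [ENNReal.tsum_coe_ne_top_iff_summable, ← NNReal.summable_coe]
  convert Real.summable_one_div_int_pow.mpr one_lt_two using 2 with n
  push_cast
  rw [Nat.cast_natAbs, Int.cast_abs, inv_pow, sq_abs, one_div]

-- For `p = (k₃, k₄)` and `k₁ + k₂ + k₃ + k₄ = k`, this is
-- `1 / (|k₃ + k₄| |k₁ + k₂ + k₃| |k₁ + k₂ + k₄|)`.
noncomputable def multiplier (k : ℤ) (p : ℤ × ℤ) : ℝ≥0∞ :=
  invAbs (p.1 + p.2) * invAbs (k - p.2) * invAbs (k - p.1)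

theorem l2Norm_multiplier_le : l2Norm (Function.uncurry multiplier) ≤ l2Norm invAbs ^ 3 := by
  set K := ∑' n, invAbs n ^ 2
  have hshift (u v : ℤ) : ∑' k : ℤ, invAbs (2 * k - u - v) ^ 2 ≤ K :=
    ENNReal.tsum_comp_le_tsum_of_injective (fun k l h => by omega) (invAbs · ^ 2)
  -- substitute `p = (k - u, k - v)`
  have hfiber (k : ℤ) : ∑' p : ℤ × ℤ, multiplier k p ^ 2 =
      ∑' w : ℤ × ℤ, invAbs w.1 ^ 2 * invAbs w.2 ^ 2 * invAbs (2 * k - w.1 - w.2) ^ 2 := by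
    rw [← ((Equiv.subLeft k).prodCongr (Equiv.subLeft k)).tsum_eq]
    refine tsum_congr fun w => ?_
    simp only [multiplier, Equiv.prodCongr_apply, Prod.map, Equiv.subLeft_apply, sub_sub_cancel]
    rw [show k - w.1 + (k - w.2) = 2 * k - w.1 - w.2 by ring]
    ring
  rw [l2Norm_le_iff, ← pow_mul, show 3 * 2 = 2 * 3 from rfl, pow_mul, l2Norm_sq]
  calc ∑' x : ℤ × ℤ × ℤ, Function.uncurry multiplier x ^ 2
      = ∑' k : ℤ, ∑' p : ℤ × ℤ, multiplier k p ^ 2 := ENNReal.tsum_prod'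
    _ = ∑' w : ℤ × ℤ, ∑' k : ℤ,
          invAbs w.1 ^ 2 * invAbs w.2 ^ 2 * invAbs (2 * k - w.1 - w.2) ^ 2 := by
        simp_rw [hfiber]
        exact ENNReal.tsum_comm
    _ = ∑' w : ℤ × ℤ, invAbs w.1 ^ 2 * invAbs w.2 ^ 2 *
          ∑' k : ℤ, invAbs (2 * k - w.1 - w.2) ^ 2 := by
        simp_rw [ENNReal.tsum_mul_left]
    _ ≤ ∑' w : ℤ × ℤ, invAbs w.1 ^ 2 * invAbs w.2 ^ 2 * K :=
        ENNReal.tsum_le_tsum fun w => by gcongr; exact hshift w.1 w.2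
    _ = K ^ 3 := by
        rw [ENNReal.tsum_mul_right, ENNReal.tsum_prod', pow_succ, sq]
        simp_rw [ENNReal.tsum_mul_left, ENNReal.tsum_mul_right]
        rfl

lemma ite_ne_zero_div_natAbs_eq (c : ℝ≥0∞) (x y z : ℤ) :
    (if x * y * z ≠ 0 then c / ((x.natAbs : ℝ≥0∞) * y.natAbs * z.natAbs) else 0) =
      c * (invAbs x * invAbs y * invAbs z) := by
  by_cases hx : x = 0
  · simp [hx, invAbs]
  by_cases hy : y = 0
  · simp [hy, invAbs]
  by_cases hz : z = 0
  · simp [hz, invAbs]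
  simp [hx, hy, hz, invAbs, div_eq_mul_inv, ENNReal.mul_inv, mul_assoc]

lemma tsum_ite_div_natAbs_eq_quadForm (b1 b2 b3 b4 : ℤ → ℝ≥0∞) (k : ℤ) :
    (∑' q : ℤ × ℤ × ℤ × ℤ,
      if q.1 + q.2.1 + q.2.2.1 + q.2.2.2 = k ∧
          (q.2.2.1 + q.2.2.2) * (q.1 + q.2.1 + q.2.2.1) * (q.1 + q.2.1 + q.2.2.2) ≠ 0
      then b1 q.1 * b2 q.2.1 * b3 q.2.2.1 * b4 q.2.2.2 /
        (((q.2.2.1 + q.2.2.2).natAbs : ℝ≥0∞) * ((q.1 + q.2.1 + q.2.2.1).natAbs : ℝ≥0∞) *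
          ((q.1 + q.2.1 + q.2.2.2).natAbs : ℝ≥0∞))
      else 0) = quadForm multiplier b1 b2 b3 b4 k := by
  refine tsum_congr fun q => ?_
  by_cases hk : q.1 + q.2.1 + q.2.2.1 + q.2.2.2 = k
  · rw [ite_and, if_pos hk, if_pos hk, ite_ne_zero_div_natAbs_eq, multiplier,
      show k - q.2.2.2 = q.1 + q.2.1 + q.2.2.1 by omega,
      show k - q.2.2.1 = q.1 + q.2.1 + q.2.2.2 by omega]
  · simp [hk]

noncomputable def weight (s : ℝ) (k : ℤ) : ℝ≥0∞ := ENNReal.ofReal ((1 + (k : ℝ) ^ 2) ^ (s / 2))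

lemma HsE_eq_l2Norm (s : ℝ) (a : ℤ → ℝ≥0∞) : HsE s a = l2Norm (fun k => weight s k * a k) := by
  rw [HsE, l2Norm]
  congr 1
  refine tsum_congr fun k => ?_
  rw [mul_pow, weight, ← ENNReal.ofReal_pow (by positivity),
    ← Real.rpow_mul_natCast (by positivity)]
  norm_num

lemma one_add_sq_add_le (x y : ℝ) : 1 + (x + y) ^ 2 ≤ 2 * ((1 + x ^ 2) * (1 + y ^ 2)) := by
  nlinarith [sq_nonneg (x * y - 1), sq_nonneg (x - y), sq_nonneg (x * y)]

lemma weight_add_le {s : ℝ} (hs : 0 ≤ s) (k l : ℤ) :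
    weight s (k + l) ≤ ENNReal.ofReal (2 ^ (s / 2)) * (weight s k * weight s l) := by
  rw [weight, weight, weight, ← ENNReal.ofReal_mul (by positivity),
    ← ENNReal.ofReal_mul (by positivity)]
  refine ENNReal.ofReal_le_ofReal ?_
  rw [← Real.mul_rpow (by positivity) (by positivity),
    ← Real.mul_rpow (by positivity) (by positivity)]
  exact Real.rpow_le_rpow (by positivity) (by push_cast; exact one_add_sq_add_le _ _) (by linarith)

lemma weight_add_add_add_le {s : ℝ} (hs : 0 ≤ s) (k1 k2 k3 k4 : ℤ) :
    weight s (k1 + k2 + k3 + k4) ≤ ENNReal.ofReal (2 ^ (s / 2)) ^ 3 *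
      (weight s k1 * weight s k2 * weight s k3 * weight s k4) := by
  set c := ENNReal.ofReal (2 ^ (s / 2))
  calc weight s (k1 + k2 + k3 + k4)
      ≤ c * (c * (c * (weight s k1 * weight s k2) * weight s k3) * weight s k4) := by
        refine (weight_add_le hs _ _).trans ?_
        gcongr
        refine (weight_add_le hs _ _).trans ?_
        gcongr
        exact weight_add_le hs _ _
    _ = _ := by ring

lemma weight_mul_quadForm_le {s : ℝ} (hs : 0 ≤ s) (m : ℤ → ℤ × ℤ → ℝ≥0∞)
    (b1 b2 b3 b4 : ℤ → ℝ≥0∞) (k : ℤ) :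
    weight s k * quadForm m b1 b2 b3 b4 k ≤ ENNReal.ofReal (2 ^ (s / 2)) ^ 3 *
      quadForm m (fun k => weight s k * b1 k) (fun k => weight s k * b2 k)
        (fun k => weight s k * b3 k) (fun k => weight s k * b4 k) k := by
  rw [quadForm, quadForm, ← ENNReal.tsum_mul_left, ← ENNReal.tsum_mul_left]
  refine ENNReal.tsum_le_tsum fun q => ?_
  split_ifs with hk
  · calc weight s k * (b1 q.1 * b2 q.2.1 * b3 q.2.2.1 * b4 q.2.2.2 * m k (q.2.2.1, q.2.2.2))
        ≤ ENNReal.ofReal (2 ^ (s / 2)) ^ 3 *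
            (weight s q.1 * weight s q.2.1 * weight s q.2.2.1 * weight s q.2.2.2) *
            (b1 q.1 * b2 q.2.1 * b3 q.2.2.1 * b4 q.2.2.2 * m k (q.2.2.1, q.2.2.2)) := by
          gcongr
          rw [← hk]
          exact weight_add_add_add_le hs _ _ _ _
      _ = _ := by ring
  · simp

theorem HsE_quadForm_multiplier_le {s : ℝ} (hs : 0 ≤ s) (b1 b2 b3 b4 : ℤ → ℝ≥0∞) :
    HsE s (quadForm multiplier b1 b2 b3 b4) ≤
      ENNReal.ofReal (2 ^ (s / 2)) ^ 3 * l2Norm invAbs ^ 3 *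
        HsE s b1 * HsE s b2 * HsE s b3 * HsE s b4 := by
  set c := ENNReal.ofReal (2 ^ (s / 2)) ^ 3
  simp only [HsE_eq_l2Norm]
  calc l2Norm (fun k => weight s k * quadForm multiplier b1 b2 b3 b4 k)
      ≤ l2Norm (fun k => c * quadForm multiplier (fun k => weight s k * b1 k)
          (fun k => weight s k * b2 k) (fun k => weight s k * b3 k)
          (fun k => weight s k * b4 k) k) :=
        l2Norm_mono fun k => weight_mul_quadForm_le hs _ _ _ _ _ k
    _ ≤ c * (l2Norm (fun k => weight s k * b1 k) * l2Norm (fun k => weight s k * b2 k) *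
          l2Norm (fun k => weight s k * b3 k) * l2Norm (fun k => weight s k * b4 k) *
          l2Norm invAbs ^ 3) := by
        rw [l2Norm_const_mul]
        gcongr
        exact (l2Norm_quadForm_le _ _ _ _ _).trans (by gcongr; exact l2Norm_multiplier_le)
    _ = _ := by ring

lemma ENNReal.exists_pos_le_ofReal {x : ℝ≥0∞} (hx : x ≠ ⊤) :
    ∃ C : ℝ, 0 < C ∧ x ≤ ENNReal.ofReal C :=
  ⟨x.toReal + 1, by positivity,
    (ENNReal.ofReal_toReal hx).ge.trans (ENNReal.ofReal_le_ofReal (by linarith))⟩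

theorem stmt13 (s : ℝ) (hs : 0 ≤ s) :
    ∃ C : ℝ, 0 < C ∧ ∀ a1 a2 a3 a4 : ℤ → NNReal,
      HsE s (fun k =>
        ∑' q : ℤ × ℤ × ℤ × ℤ,
          if q.1 + q.2.1 + q.2.2.1 + q.2.2.2 = k ∧
             (q.2.2.1 + q.2.2.2) * (q.1 + q.2.1 + q.2.2.1) * (q.1 + q.2.1 + q.2.2.2) ≠ 0
          then (a1 q.1 : ℝ≥0∞) * (a2 q.2.1 : ℝ≥0∞) * (a3 q.2.2.1 : ℝ≥0∞) *
                (a4 q.2.2.2 : ℝ≥0∞) /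
              (((q.2.2.1 + q.2.2.2).natAbs : ℝ≥0∞) *
                ((q.1 + q.2.1 + q.2.2.1).natAbs : ℝ≥0∞) *
                ((q.1 + q.2.1 + q.2.2.2).natAbs : ℝ≥0∞))
          else 0)
      ≤ ENNReal.ofReal C * HsE s (fun k => (a1 k : ℝ≥0∞)) * HsE s (fun k => (a2 k : ℝ≥0∞)) *
          HsE s (fun k => (a3 k : ℝ≥0∞)) * HsE s (fun k => (a4 k : ℝ≥0∞)) := by
  obtain ⟨C, hC, hcC⟩ := ENNReal.exists_pos_le_ofReal
    (x := ENNReal.ofReal (2 ^ (s / 2)) ^ 3 * l2Norm invAbs ^ 3)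
    (by finiteness [l2Norm_invAbs_ne_top])
  refine ⟨C, hC, fun a1 a2 a3 a4 => ?_⟩
  calc _ = HsE s (quadForm multiplier (a1 ·) (a2 ·) (a3 ·) (a4 ·)) :=
        congrArg _ (funext (tsum_ite_div_natAbs_eq_quadForm (a1 ·) (a2 ·) (a3 ·) (a4 ·)))
    _ ≤ _ := HsE_quadForm_multiplier_le hs _ _ _ _
    _ ≤ _ := by gcongr
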